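/- For coprime integers p and q with q ≥ 1, where s(p,q) is the Dedekind sum, 6q·s(p,q) ∈ ℤ. -/

import Mathlib

open Finset

/-- The sawtooth function `((x)) = x − ⌊x⌋ − 1/2` for `x ∉ ℤ`, `((x)) = 0` for `x ∈ ℤ`. -/
noncomputable def sawtooth (x : ℝ) : ℝ :=
  if Int.fract x = 0 then 0 else Int.fract x - 1 / 2

/-- The Dedekind sum `s(p,q) = ∑_{j=1}^{q−1} ((j/q))((pj/q))`. -/
noncomputable def dedekindSum' (p : ℤ) (q : ℕ) : ℝ :=
  ∑ j ∈ Finset.Ico 1 q, sawtooth ((j : ℝ) / q) * sawtooth ((p : ℝ) * j / q)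

lemma aux_six_sum_sq (q : ℕ) :
    6 * ∑ j ∈ Finset.range q, (j : ℤ) ^ 2 = q * (q - 1) * (2 * q - 1) := by
  induction q with
  | zero => simp
  | succ n ih =>
    rw [Finset.sum_range_succ, mul_add, ih]
    push_cast
    ring

/-- Classical arithmetic fact: `6q·s(p,q)` is an integer for coprime `p, q`. -/
theorem stmt19 (p : ℤ) (q : ℕ) (hq : 1 ≤ q) (hcop : Int.gcd p (q : ℤ) = 1) :
    ∃ k : ℤ, 6 * (q : ℝ) * dedekindSum' p q = (k : ℝ) := by
  have hq0 : 0 < q := hq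
  have hqR : (0 : ℝ) < (q : ℝ) := by exact_mod_cast hq0
  have hqR0 : (q : ℝ) ≠ 0 := ne_of_gt hqR
  set r : ℕ → ℤ := fun j => (p * j) % q with hr
  -- each term of the sum simplifies
  have hterm : ∀ j ∈ Finset.Ico 1 q,
      sawtooth ((j : ℝ) / q) * sawtooth ((p : ℝ) * j / q)
        = ((j : ℝ) / q - 1 / 2) * ((r j : ℝ) / q - 1 / 2) := by
    intro j hj
    rw [Finset.mem_Ico] at hj
    obtain ⟨hj1, hj2⟩ := hj
    have hjR : (0 : ℝ) < (j : ℝ) := by exact_mod_cast hj1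
    have hfr1 : Int.fract ((j : ℝ) / q) = (j : ℝ) / q := by
      rw [Int.fract_eq_self]
      constructor
      · positivity
      · rw [div_lt_one hqR]; exact_mod_cast hj2
    have hfr2 : Int.fract ((p : ℝ) * j / q) = (r j : ℝ) / q := by
      have : (p : ℝ) * j = ((p * j : ℤ) : ℝ) := by push_cast; ring
      rw [this, Int.fract_div_intCast_eq_div_intCast_mod]
    have hrne : r j ≠ 0 := by
      intro h
      have hdvd : (q : ℤ) ∣ p * j := Int.dvd_of_emod_eq_zero h
      have hcop' : IsCoprime (q : ℤ) p := by
        rw [Int.isCoprime_iff_gcd_eq_one, Int.gcd_comm]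
        exact hcop
      have : (q : ℤ) ∣ (j : ℤ) := hcop'.dvd_of_dvd_mul_left hdvd
      have : q ∣ j := by exact_mod_cast this
      exact absurd (Nat.le_of_dvd hj1 this) (not_le.2 hj2)
    have hr2ne : (r j : ℝ) / q ≠ 0 := by
      simp only [div_ne_zero_iff]
      exact ⟨by exact_mod_cast hrne, hqR0⟩
    have h1ne : (j : ℝ) / q ≠ 0 := by positivity
    rw [sawtooth, sawtooth, hfr1, hfr2, if_neg h1ne, if_neg hr2ne]
  -- integer quantities
  set S : ℤ := ∑ j ∈ Finset.Ico 1 q, (j : ℤ) * r j with hS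
  set A : ℤ := ∑ j ∈ Finset.Ico 1 q, (j : ℤ) with hA
  set B : ℤ := ∑ j ∈ Finset.Ico 1 q, r j with hB
  -- sum of squares over Ico 1 q
  have hsq : 6 * ∑ j ∈ Finset.Ico 1 q, (j : ℤ) ^ 2 = q * (q - 1) * (2 * q - 1) := by
    rw [← aux_six_sum_sq q, Finset.range_eq_Ico, Finset.sum_eq_sum_Ico_succ_bot hq0]
    norm_num
  -- q divides 6S
  have hdvd1 : (q : ℤ) ∣ S - p * ∑ j ∈ Finset.Ico 1 q, (j : ℤ) ^ 2 := by
    rw [hS, Finset.mul_sum, ← Finset.sum_sub_distrib]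
    refine Finset.dvd_sum fun j _ => ?_
    have h1 : (j : ℤ) * r j - p * (j : ℤ) ^ 2 = (j : ℤ) * (r j - p * j) := by ring
    rw [h1]
    refine Dvd.dvd.mul_left ?_ _
    exact ⟨-((p * j) / q), by rw [hr]; simp only; rw [Int.emod_def]; ring⟩
  obtain ⟨d, hd⟩ := hdvd1
  have hdvd : 6 * S = q * (6 * d + p * ((q - 1) * (2 * q - 1))) := by
    have h2 : S = p * (∑ j ∈ Finset.Ico 1 q, (j : ℤ) ^ 2) + q * d := by linarith
    linear_combination 6 * h2 + p * hsq
  set t : ℤ := 6 * d + p * ((q - 1) * (2 * q - 1)) with htdef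
  -- evenness of q(q-1)
  obtain ⟨c, hc⟩ := Int.even_mul_succ_self ((q : ℤ) - 1)
  refine ⟨t - 3 * A - 3 * B + 3 * c, ?_⟩
  -- main computation
  have hstep : 6 * (q : ℝ) * dedekindSum' p q
      = ∑ j ∈ Finset.Ico 1 q,
          (6 * (j : ℝ) * (r j : ℝ) / q - 3 * (j : ℝ) - 3 * (r j : ℝ) + 3 * (q : ℝ) / 2) := by
    rw [dedekindSum', Finset.mul_sum]
    refine Finset.sum_congr rfl fun j hj => ?_
    rw [hterm j hj]
    field_simp
    ring
  have hSR : ((S : ℤ) : ℝ) = ∑ j ∈ Finset.Ico 1 q, (j : ℝ) * (r j : ℝ) := by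
    rw [hS]; push_cast; rfl
  have hAR : ((A : ℤ) : ℝ) = ∑ j ∈ Finset.Ico 1 q, (j : ℝ) := by
    rw [hA]; push_cast; rfl
  have hBR : ((B : ℤ) : ℝ) = ∑ j ∈ Finset.Ico 1 q, (r j : ℝ) := by
    rw [hB]; push_cast; rfl
  have hexpand : ∑ j ∈ Finset.Ico 1 q,
      (6 * (j : ℝ) * (r j : ℝ) / q - 3 * (j : ℝ) - 3 * (r j : ℝ) + 3 * (q : ℝ) / 2)
      = 6 * (S : ℝ) / q - 3 * (A : ℝ) - 3 * (B : ℝ) + ((q : ℝ) - 1) * (3 * (q : ℝ) / 2) := by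
    have e1 : ∀ j ∈ Finset.Ico 1 q,
        6 * (j : ℝ) * (r j : ℝ) / q - 3 * (j : ℝ) - 3 * (r j : ℝ) + 3 * (q : ℝ) / 2
          = (6 / (q : ℝ)) * ((j : ℝ) * (r j : ℝ)) - 3 * (j : ℝ) - 3 * (r j : ℝ)
            + 3 * (q : ℝ) / 2 := fun j _ => by ring
    rw [Finset.sum_congr rfl e1, Finset.sum_add_distrib, Finset.sum_sub_distrib,
      Finset.sum_sub_distrib, ← Finset.mul_sum, ← Finset.mul_sum, ← Finset.mul_sum,
      Finset.sum_const, Nat.card_Ico, nsmul_eq_mul, ← hSR, ← hAR, ← hBR,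
      Nat.cast_sub hq]
    push_cast
    ring
  rw [hstep, hexpand]
  have htR : 6 * (S : ℝ) = (q : ℝ) * (t : ℝ) := by exact_mod_cast hdvd
  have hc' : ((q : ℤ) - 1) * (q : ℤ) = c + c := by linear_combination hc
  have hcR : ((q : ℝ) - 1) * (q : ℝ) = (c : ℝ) + (c : ℝ) := by exact_mod_cast hc'
  push_cast
  field_simp
  nlinarith [htR, hcR]
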